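/- For a graph G with at least one edge that contains no bridges and no loops, the polynomial χ_G(0,t) is nonzero. -/

import Mathlib

/-- A finite multigraph: vertices, edges, and an endpoint map allowing loops
and parallel edges. -/
structure Multigraph where
  V : Type
  E : Type
  [fintypeV : Fintype V]
  [fintypeE : Fintype E]
  [decEqV : DecidableEq V]
  [decEqE : DecidableEq E]
  ends : E → Sym2 V

attribute [instance] Multigraph.fintypeV Multigraph.fintypeE
  Multigraph.decEqV Multigraph.decEqE

namespace Multigraph

/-- The simple graph on `G.V` whose adjacency is induced by the edges in `H`. -/
def sg (G : Multigraph) (H : Finset G.E) : SimpleGraph G.V :=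
  SimpleGraph.fromRel (fun x y => ∃ e ∈ H, G.ends e = s(x, y))

/-- Number of connected components of the spanning subgraph `G|H`. -/
noncomputable def k (G : Multigraph) (H : Finset G.E) : ℕ :=
  Nat.card (G.sg H).ConnectedComponent

/-- The Tutte polynomial of `G` (via the Whitney rank / subset expansion, which is
the closed form of the deletion-contraction recursion), evaluated at `x`, `y`.
Here `k A - k univ = r(E) - r(A)` and `A.card + k A - card V = |A| - r(A)`. -/
noncomputable def tutteEval (G : Multigraph) {R : Type} [CommRing R] (x y : R) : R :=
  ∑ A : Finset G.E,
    (x - 1) ^ (G.k A - G.k Finset.univ) *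
      (y - 1) ^ (A.card + G.k A - Fintype.card G.V)

/-- A loop is an edge joining a vertex to itself. -/
def IsLoop (G : Multigraph) (e : G.E) : Prop := (G.ends e).IsDiag

/-- `e ∈ H` is a bridge of the spanning subgraph `G|H`: deleting it changes
(necessarily increases) the number of connected components. -/
def IsBridgeIn (G : Multigraph) (H : Finset G.E) (e : G.E) : Prop :=
  G.k (H.erase e) ≠ G.k H

/-- `e` is contained in a cycle of `G|H`: it is a loop (a cycle of length one) or its two
(distinct) endpoints remain connected after deleting it. -/
def MemCycle (G : Multigraph) (H : Finset G.E) (e : G.E) : Prop :=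
  ∃ x y, G.ends e = s(x, y) ∧ (x = y ∨ (G.sg (H.erase e)).Reachable x y)

/-- `G|H`: restriction (spanning subgraph) to the edges of `H`. -/
def restrict (G : Multigraph) (H : Finset G.E) : Multigraph where
  V := G.V
  E := {e : G.E // e ∈ H}
  ends := fun e => G.ends e.1

/-- `G/H`: contraction of all the edges of `H`. -/
noncomputable def contract (G : Multigraph) (H : Finset G.E) : Multigraph where
  V := (G.sg H).ConnectedComponent
  E := {e : G.E // e ∉ H}
  fintypeV := Fintype.ofFinite _
  decEqV := Classical.decEq _
  ends := fun e => (G.ends e.1).map (SimpleGraph.connectedComponentMk (G.sg H))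

end Multigraph

open Multigraph

/-!
Expanding `tutteEval` at `x = 0`, `y = t` gives `χ_G(0, t) = ∑_A ± (t - 1) ^ n(A)`, where
`n(A) = |A| + k(A) - |V|` is the nullity of `A`. The nullity is monotone in `A`: adding an edge
raises `|A|` by one and lowers `k` by at most one. In a bridgeless graph deleting any single edge
keeps `k`, so every proper subset of `E` has nullity strictly below `n(E)`. Hence the term
`A = E`, which is `(t - 1) ^ n(E)` with sign `+`, alone reaches degree `n(E)`, and `χ_G(0, t)` is
monic.
-/

open Polynomial in
theorem Polynomial.monic_sum_smul_X_sub_C_pow {ι R : Type*} [CommRing R] [Nontrivial R]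
    {s : Finset ι} {i₀ : ι} (hi₀ : i₀ ∈ s) (c : ι → R) (n : ι → ℕ) (a : R) (hc : c i₀ = 1)
    (hn : ∀ i ∈ s, i ≠ i₀ → n i < n i₀) :
    (∑ i ∈ s, c i • (X - C a) ^ n i).Monic := by
  classical
  have hdeg (m : ℕ) : ((X - C a) ^ m).degree = (m : WithBot ℕ) := by
    rw [degree_eq_natDegree ((monic_X_sub_C a).pow m).ne_zero,
      (monic_X_sub_C a).natDegree_pow, natDegree_X_sub_C, mul_one]
  rw [← Finset.add_sum_erase s _ hi₀, hc, one_smul]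
  refine ((monic_X_sub_C a).pow _).add_of_left ?_
  refine (degree_sum_le _ _).trans_lt ?_
  rw [hdeg, Finset.sup_lt_iff (WithBot.bot_lt_coe _)]
  intro i hi
  obtain ⟨hne, hi⟩ := Finset.mem_erase.mp hi
  calc (c i • (X - C a) ^ n i).degree ≤ (n i : WithBot ℕ) :=
        (degree_smul_le _ _).trans (hdeg _).le
    _ < n i₀ := WithBot.coe_lt_coe.mpr (hn i hi hne)

namespace SimpleGraph

variable {V : Type*} {G : SimpleGraph V} {u v : V}

lemma Walk.reachable_or_reachable_of_sup_edge {x y : V} (p : (G ⊔ edge u v).Walk x y) :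
    G.Reachable x y ∨ G.Reachable x u ∨ G.Reachable x v := by
  induction p with
  | nil => exact .inl .rfl
  | @cons a b c hab _ ih =>
    rcases (sup_adj _ _ _ _).mp hab with hab | hab
    · exact ih.imp hab.reachable.trans (Or.imp hab.reachable.trans hab.reachable.trans)
    · obtain ⟨⟨rfl, -⟩ | ⟨rfl, -⟩, -⟩ := (edge_adj _ _ _ _).mp hab
      exacts [.inr (.inl .rfl), .inr (.inr .rfl)]

lemma ConnectedComponent.eq_or_eq_mk_of_map_sup_edge_eq {c d : G.ConnectedComponent}
    (h : c.map (Hom.ofLE le_sup_left) = d.map (Hom.ofLE (le_sup_left (b := edge u v)))) :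
    c = d ∨ c = G.connectedComponentMk u ∨ c = G.connectedComponentMk v := by
  induction c, d using ConnectedComponent.ind₂ with
  | h x y =>
    simp only [ConnectedComponent.map_mk, Hom.ofLE_apply, ConnectedComponent.eq] at h ⊢
    obtain ⟨p⟩ := h
    exact p.reachable_or_reachable_of_sup_edge

/-- Adding an edge merges at most two components into one. -/
lemma card_connectedComponent_le_sup_edge_add_one [Finite V] (u v : V) :
    Nat.card G.ConnectedComponent ≤ Nat.card (G ⊔ edge u v).ConnectedComponent + 1 := by
  classical
  let f (c : G.ConnectedComponent) : Option (G ⊔ edge u v).ConnectedComponent :=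
    if c = G.connectedComponentMk v then none else some (c.map (Hom.ofLE le_sup_left))
  have hf : f.Injective := by
    intro c d hcd
    by_cases hc : c = G.connectedComponentMk v <;> by_cases hd : d = G.connectedComponentMk v
    · rw [hc, hd]
    all_goals simp only [f, hc, hd, if_true, if_false, reduceCtorEq, Option.some_inj] at hcd
    rcases ConnectedComponent.eq_or_eq_mk_of_map_sup_edge_eq hcd with h | h | h
    · exact h
    · rcases ConnectedComponent.eq_or_eq_mk_of_map_sup_edge_eq hcd.symm with h' | h' | h'
      exacts [h'.symm, h.trans h'.symm, absurd h' hd]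
    · exact absurd h hc
  simpa using Nat.card_le_card_of_injective f hf

end SimpleGraph

namespace Multigraph

open Finset SimpleGraph Polynomial

variable (G : Multigraph)

lemma sg_insert_le {e : G.E} {u v : G.V} (he : G.ends e = s(u, v)) (A : Finset G.E) :
    G.sg (insert e A) ≤ G.sg A ⊔ edge u v := by
  intro x y hxy
  obtain ⟨hne, hxy⟩ := fromRel_adj _ _ _ |>.mp hxy
  obtain ⟨f, hf, hfe⟩ : ∃ f ∈ insert e A, G.ends f = s(x, y) := by
    rcases hxy with h | ⟨f, hf, hfe⟩
    exacts [h, ⟨f, hf, hfe.trans Sym2.eq_swap⟩]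
  rcases mem_insert.mp hf with rfl | hfA
  · refine .inr ((edge_adj _ _ _ _).mpr ⟨?_, hne⟩)
    rw [he, Sym2.eq_iff] at hfe
    rcases hfe with ⟨rfl, rfl⟩ | ⟨rfl, rfl⟩ <;> simp
  · exact .inl ((fromRel_adj _ _ _).mpr ⟨hne, .inl ⟨f, hfA, hfe⟩⟩)

lemma k_le_k_insert_add_one (e : G.E) (A : Finset G.E) : G.k A ≤ G.k (insert e A) + 1 := by
  induction h : G.ends e using Sym2.ind with
  | h u v =>
    calc G.k A ≤ Nat.card (G.sg A ⊔ edge u v).ConnectedComponent + 1 :=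
          card_connectedComponent_le_sup_edge_add_one u v
      _ ≤ G.k (insert e A) + 1 := by
          gcongr
          exact ConnectedComponent.card_le_card_of_le (G.sg_insert_le h A)

lemma k_empty : G.k ∅ = Fintype.card G.V := by
  have hbot : G.sg ∅ = ⊥ := by
    ext x y
    simp [sg]
  rw [k, hbot, ← Nat.card_eq_fintype_card]
  refine (Nat.card_eq_of_bijective _ ⟨fun x y h => ?_, fun c => c.exists_rep⟩).symm
  exact reachable_bot.mp (ConnectedComponent.exact h)

lemma card_add_k_le_insert (e : G.E) (A : Finset G.E) :
    #A + G.k A ≤ #(insert e A) + G.k (insert e A) := by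
  by_cases he : e ∈ A
  · rw [insert_eq_of_mem he]
  · have := G.k_le_k_insert_add_one e A
    rw [card_insert_of_notMem he]
    omega

lemma card_add_k_mono {A B : Finset G.E} (h : A ⊆ B) : #A + G.k A ≤ #B + G.k B := by
  rw [← union_sdiff_of_subset h]
  induction B \ A using Finset.induction_on with
  | empty => rw [union_empty]
  | insert e D _ ih => exact ih.trans (by rw [union_insert]; exact G.card_add_k_le_insert e _)

/-- The nullity `|A| - r(A)` of the edge set `A`, where `r(A) = |V| - k(A)` is its rank. -/
noncomputable def nullity (A : Finset G.E) : ℕ := #A + G.k A - Fintype.card G.V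

lemma card_V_le_card_add_k (A : Finset G.E) : Fintype.card G.V ≤ #A + G.k A := by
  simpa [k_empty] using G.card_add_k_mono (empty_subset A)

/-- If `e ∉ A` then `A ⊆ E - e`, and deleting the non-bridge `e` lowers `|E| + k(E)` by exactly
one. -/
lemma nullity_lt_nullity_univ (hbridge : ∀ e, ¬ G.IsBridgeIn univ e) {A : Finset G.E}
    (hA : A ≠ univ) : G.nullity A < G.nullity univ := by
  obtain ⟨e, heA⟩ : ∃ e, e ∉ A := by simpa [eq_univ_iff_forall] using hA
  have hmono := G.card_add_k_mono (subset_erase.mpr ⟨subset_univ A, heA⟩)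
  have hk : G.k (univ.erase e) = G.k univ := not_ne_iff.mp (hbridge e)
  have hcard := card_erase_add_one (mem_univ e)
  have := G.card_V_le_card_add_k A
  unfold nullity
  omega

theorem tutteEval_zero_X_monic {R : Type} [CommRing R] [Nontrivial R]
    (hbridge : ∀ e, ¬ G.IsBridgeIn univ e) : (G.tutteEval (0 : R[X]) X).Monic := by
  have hsum : G.tutteEval (0 : R[X]) X =
      ∑ A, (-1 : R) ^ (G.k A - G.k univ) • (X - C 1) ^ G.nullity A := by
    simp [tutteEval, nullity, Polynomial.smul_eq_C_mul]
  rw [hsum]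
  exact monic_sum_smul_X_sub_C_pow (mem_univ univ) _ _ _ (by simp)
    fun A _ hA => G.nullity_lt_nullity_univ hbridge hA

end Multigraph

theorem tutte_eval_ne_zero_general (G : Multigraph)
    (hbridge : ∀ e, ¬ G.IsBridgeIn Finset.univ e) :
    G.tutteEval (0 : Polynomial ℤ) Polynomial.X ≠ 0 :=
  (G.tutteEval_zero_X_monic hbridge).ne_zero

/-- For a graph `G` with at least one edge containing no bridges and no loops,
the polynomial `χ_G(0, t)` is nonzero. -/
theorem tutte_eval_ne_zero (G : Multigraph) (hE : Nonempty G.E)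
    (hbridge : ∀ e, ¬ G.IsBridgeIn Finset.univ e) (hloop : ∀ e, ¬ G.IsLoop e) :
    G.tutteEval (0 : Polynomial ℤ) Polynomial.X ≠ 0 :=
  tutte_eval_ne_zero_general G hbridge
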